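/- Let A be a commutative ring. The A-modules cr_2(L^3_1)(A,A) and cr_3(L^3_1)(A,A,A) are free of rank 2. -/
import Mathlib


open TensorProduct

open TensorProduct

section SymLib
variable (R : Type*) [CommRing R]

/-- Relations defining the second symmetric power. -/
def sq2 (M : Type*) [AddCommGroup M] [Module R M] : Submodule R (M ⊗[R] M) :=
  Submodule.span R {x | ∃ a b : M, x = a ⊗ₜ[R] b - b ⊗ₜ[R] a}

/-- The second symmetric power. -/
abbrev SymSq (M : Type*) [AddCommGroup M] [Module R M] := (M ⊗[R] M) ⧸ sq2 R M

/-- Relations defining the third symmetric power. -/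
def sq3 (M : Type*) [AddCommGroup M] [Module R M] : Submodule R (M ⊗[R] (M ⊗[R] M)) :=
  Submodule.span R
    ({x | ∃ a b c : M, x = a ⊗ₜ[R] (b ⊗ₜ[R] c) - b ⊗ₜ[R] (a ⊗ₜ[R] c)} ∪
     {x | ∃ a b c : M, x = a ⊗ₜ[R] (b ⊗ₜ[R] c) - a ⊗ₜ[R] (c ⊗ₜ[R] b)})

/-- The third symmetric power. -/
abbrev SymCube (M : Type*) [AddCommGroup M] [Module R M] := (M ⊗[R] (M ⊗[R] M)) ⧸ sq3 R M

variable {M N : Type*} [AddCommGroup M] [Module R M] [AddCommGroup N] [Module R N]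

/-- Multiplication by `v` as a map `Sym² M → Sym³ M`. -/
noncomputable def symMulAux (v : M) : SymSq R M →ₗ[R] SymCube R M :=
  Submodule.liftQ _ ((sq3 R M).mkQ ∘ₗ TensorProduct.mk R M (M ⊗[R] M) v) (by
    rw [sq2, Submodule.span_le]
    rintro x ⟨a, b, rfl⟩
    simp only [SetLike.mem_coe, LinearMap.mem_ker, LinearMap.comp_apply,
      TensorProduct.mk_apply, map_sub, tmul_sub]
    rw [← map_sub, Submodule.mkQ_apply, Submodule.Quotient.mk_eq_zero]
    exact Submodule.subset_span (Or.inr ⟨v, a, b, rfl⟩))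

lemma symMulAux_mk (v : M) (x : M ⊗[R] M) :
    symMulAux R v (Submodule.Quotient.mk x) = Submodule.Quotient.mk (v ⊗ₜ[R] x) := rfl

/-- The multiplication `M ⊗ Sym² M → Sym³ M` as a bilinear map. -/
noncomputable def symMulBil : M →ₗ[R] SymSq R M →ₗ[R] SymCube R M where
  toFun := symMulAux R
  map_add' v w := by
    refine LinearMap.ext fun x => ?_
    obtain ⟨y, rfl⟩ := Submodule.Quotient.mk_surjective _ x
    simp [symMulAux_mk, add_tmul, Submodule.Quotient.mk_add]
  map_smul' r v := by
    refine LinearMap.ext fun x => ?_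
    obtain ⟨y, rfl⟩ := Submodule.Quotient.mk_surjective _ x
    simp only [symMulAux_mk, RingHom.id_apply, LinearMap.smul_apply]
    rw [← Submodule.Quotient.mk_smul, smul_tmul']

/-- The multiplication map `M ⊗ Sym² M → Sym³ M`. -/
noncomputable def symMul : M ⊗[R] SymSq R M →ₗ[R] SymCube R M :=
  TensorProduct.lift (symMulBil R)

lemma symMul_tmul (v : M) (x : M ⊗[R] M) :
    symMul R (v ⊗ₜ[R] (Submodule.Quotient.mk x)) = Submodule.Quotient.mk (v ⊗ₜ[R] x) := rfl

/-- The Schur functor `L³₁`, the kernel of the multiplication `M ⊗ Sym² M → Sym³ M`. -/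
noncomputable def SchurL31 : Submodule R (M ⊗[R] SymSq R M) := LinearMap.ker (symMul R)

variable {R}

/-- Functoriality of `Sym²`. -/
noncomputable def symSqMap (f : M →ₗ[R] N) : SymSq R M →ₗ[R] SymSq R N :=
  Submodule.mapQ _ _ (TensorProduct.map f f) (by
    rw [sq2, Submodule.span_le]
    rintro x ⟨a, b, rfl⟩
    simp only [SetLike.mem_coe, Submodule.mem_comap, map_sub, TensorProduct.map_tmul]
    exact Submodule.subset_span ⟨f a, f b, rfl⟩)

/-- Functoriality of `Sym³`. -/
noncomputable def symCubeMap (f : M →ₗ[R] N) : SymCube R M →ₗ[R] SymCube R N :=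
  Submodule.mapQ _ _ (TensorProduct.map f (TensorProduct.map f f)) (by
    rw [sq3, Submodule.span_le]
    rintro x (⟨a, b, c, rfl⟩ | ⟨a, b, c, rfl⟩) <;>
      simp only [SetLike.mem_coe, Submodule.mem_comap, map_sub, TensorProduct.map_tmul]
    · exact Submodule.subset_span (Or.inl ⟨f a, f b, f c, rfl⟩)
    · exact Submodule.subset_span (Or.inr ⟨f a, f b, f c, rfl⟩))

end SymLib

section SymLib2
variable {R : Type*} [CommRing R]
variable {M N : Type*} [AddCommGroup M] [Module R M] [AddCommGroup N] [Module R N]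

lemma symMul_natural (f : M →ₗ[R] N) :
    symCubeMap f ∘ₗ symMul R = symMul R ∘ₗ TensorProduct.map f (symSqMap f) := by
  apply TensorProduct.ext'
  intro v x
  obtain ⟨y, rfl⟩ := Submodule.Quotient.mk_surjective _ x
  simp only [LinearMap.comp_apply, TensorProduct.map_tmul]
  rw [symMul_tmul]
  show Submodule.Quotient.mk ((TensorProduct.map f (TensorProduct.map f f)) (v ⊗ₜ[R] y)) = _
  rw [TensorProduct.map_tmul,
    show symSqMap f (Submodule.Quotient.mk y) = Submodule.Quotient.mk (TensorProduct.map f f y) from rfl,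
    symMul_tmul]

/-- Functoriality of the Schur functor `L³₁`. -/
noncomputable def schurL31Map (f : M →ₗ[R] N) : SchurL31 (R := R) (M := M) →ₗ[R] SchurL31 (R := R) (M := N) :=
  LinearMap.restrict (TensorProduct.map f (symSqMap f)) (fun x hx => by
    have := congrFun (congrArg DFunLike.coe (symMul_natural f)) x
    simp only [LinearMap.comp_apply] at this
    simp only [SchurL31, LinearMap.mem_ker] at hx ⊢
    rw [← this, hx, map_zero])

end SymLib2

section CrossEffect
variable {A : Type*} [CommRing A]
variable {M : Type*} [AddCommGroup M] [Module A M]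

/-- The map induced on `M ⊗ Sym² M` by an endomorphism `p` of `M`;
the Schur functor `L³₁` is a subfunctor of this construction. -/
noncomputable def ambMap (p : M →ₗ[A] M) :
    M ⊗[A] SymSq A M →ₗ[A] M ⊗[A] SymSq A M :=
  TensorProduct.map p (symSqMap p)

end CrossEffect

section Projections
variable (A V W : Type*) [CommRing A] [AddCommGroup V] [Module A V]
  [AddCommGroup W] [Module A W]

/-- First projection-inclusion endomorphism of `V ⊕ W`. -/
noncomputable def prj1 : V × W →ₗ[A] V × W := (LinearMap.inl A V W) ∘ₗ (LinearMap.fst A V W)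

/-- Second projection-inclusion endomorphism of `V ⊕ W`. -/
noncomputable def prj2 : V × W →ₗ[A] V × W := (LinearMap.inr A V W) ∘ₗ (LinearMap.snd A V W)

end Projections

section TripleProjections
variable (A V W X : Type*) [CommRing A] [AddCommGroup V] [Module A V]
  [AddCommGroup W] [Module A W] [AddCommGroup X] [Module A X]

/-- First projection-inclusion endomorphism of `V ⊕ W ⊕ X`. -/
noncomputable def qrj1 : V × W × X →ₗ[A] V × W × X :=
  LinearMap.prodMap LinearMap.id 0

/-- Second projection-inclusion endomorphism of `V ⊕ W ⊕ X`. -/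
noncomputable def qrj2 : V × W × X →ₗ[A] V × W × X :=
  LinearMap.prodMap 0 (LinearMap.prodMap LinearMap.id 0)

/-- Third projection-inclusion endomorphism of `V ⊕ W ⊕ X`. -/
noncomputable def qrj3 : V × W × X →ₗ[A] V × W × X :=
  LinearMap.prodMap 0 (LinearMap.prodMap 0 LinearMap.id)

end TripleProjections

/-- The second cross-effect of the Schur functor `L³₁` at `(A, A)`. -/
noncomputable def cr2SchurL31AA (A : Type*) [CommRing A] :
    Submodule A ((A × A) ⊗[A] SymSq A (A × A)) :=
  Submodule.map (ambMap (prj1 A A A + prj2 A A A)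
      - ambMap (prj1 A A A) - ambMap (prj2 A A A))
    (SchurL31 (R := A) (M := A × A))

/-- The third cross-effect of the Schur functor `L³₁` at `(A, A, A)`:
the image of `L³₁(A ⊕ A ⊕ A)` under the alternating sum
`Σ_{∅ ≠ S ⊆ {1,2,3}} (-1)^{3-|S|} L³₁(Σ_{i ∈ S} pᵢ)`. -/
noncomputable def cr3SchurL31AAA (A : Type*) [CommRing A] :
    Submodule A ((A × A × A) ⊗[A] SymSq A (A × A × A)) :=
  Submodule.map (ambMap (qrj1 A A A A + qrj2 A A A A + qrj3 A A A A)
      - ambMap (qrj1 A A A A + qrj2 A A A A)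
      - ambMap (qrj1 A A A A + qrj3 A A A A)
      - ambMap (qrj2 A A A A + qrj3 A A A A)
      + ambMap (qrj1 A A A A) + ambMap (qrj2 A A A A) + ambMap (qrj3 A A A A))
    (SchurL31 (R := A) (M := A × A × A))

section MyLib
variable {A : Type*} [CommRing A]
variable {M : Type*} [AddCommGroup M] [Module A M]

lemma sqmk_comm (a b : M) :
    (Submodule.Quotient.mk (a ⊗ₜ[A] b) : SymSq A M) = Submodule.Quotient.mk (b ⊗ₜ[A] a) := by
  rw [Submodule.Quotient.eq]
  exact Submodule.subset_span ⟨a, b, rfl⟩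

lemma ambMap_tmul (p : M →ₗ[A] M) (v a b : M) :
    ambMap p (v ⊗ₜ[A] (Submodule.Quotient.mk (a ⊗ₜ[A] b))) =
      p v ⊗ₜ[A] (Submodule.Quotient.mk (p a ⊗ₜ[A] p b)) := rfl

/-- Lift a symmetric bilinear form to `Sym²`. -/
noncomputable def sqLift (f : M →ₗ[A] M →ₗ[A] A) (hf : ∀ a b, f a b = f b a) :
    SymSq A M →ₗ[A] A :=
  Submodule.liftQ _ (TensorProduct.lift f) (by
    rw [sq2, Submodule.span_le]
    rintro x ⟨a, b, rfl⟩
    simp [hf a b])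

@[simp] lemma sqLift_mk (f : M →ₗ[A] M →ₗ[A] A) (hf) (a b : M) :
    sqLift f hf (Submodule.Quotient.mk (a ⊗ₜ[A] b)) = f a b := rfl

/-- Curried trilinear form to a map on the triple tensor product. -/
noncomputable def triCurry (f : M →ₗ[A] M →ₗ[A] M →ₗ[A] A) :
    M ⊗[A] (M ⊗[A] M) →ₗ[A] A :=
  TensorProduct.lift
    { toFun := fun v => TensorProduct.lift (f v)
      map_add' := fun v w => by
        apply TensorProduct.ext'; intro a b; simp
      map_smul' := fun r v => by
        apply TensorProduct.ext'; intro a b; simp }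

@[simp] lemma triCurry_tmul (f : M →ₗ[A] M →ₗ[A] M →ₗ[A] A) (a b c : M) :
    triCurry f (a ⊗ₜ[A] (b ⊗ₜ[A] c)) = f a b c := rfl

/-- Lift a symmetric trilinear form to `Sym³`. -/
noncomputable def cubeLift (f : M →ₗ[A] M →ₗ[A] M →ₗ[A] A)
    (h12 : ∀ a b c, f a b c = f b a c) (h23 : ∀ a b c, f a b c = f a c b) :
    SymCube A M →ₗ[A] A :=
  Submodule.liftQ _ (triCurry f) (by
    rw [sq3, Submodule.span_le]
    rintro x (⟨a, b, c, rfl⟩ | ⟨a, b, c, rfl⟩) <;>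
      simp only [SetLike.mem_coe, LinearMap.mem_ker, map_sub, triCurry_tmul]
    · rw [h12 a b c]; ring
    · rw [h23 a b c]; ring)

@[simp] lemma cubeLift_mk (f : M →ₗ[A] M →ₗ[A] M →ₗ[A] A) (h12 h23) (a b c : M) :
    cubeLift f h12 h23 (Submodule.Quotient.mk (a ⊗ₜ[A] (b ⊗ₜ[A] c))) = f a b c := rfl

/-- product of two linear functionals, as a bilinear form -/
noncomputable def biProd (f g : M →ₗ[A] A) : M →ₗ[A] M →ₗ[A] A := f.smulRight g

/-- product of three linear functionals, as a trilinear form -/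
noncomputable def triProd (f g h : M →ₗ[A] A) : M →ₗ[A] M →ₗ[A] M →ₗ[A] A :=
  f.smulRight (g.smulRight h)

@[simp] lemma biProd_apply (f g : M →ₗ[A] A) (a b : M) :
    biProd f g a b = f a * g b := by simp [biProd, smul_eq_mul]

@[simp] lemma triProd_apply (f g h : M →ₗ[A] A) (a b c : M) :
    triProd f g h a b c = f a * (g b * h c) := by simp [triProd, smul_eq_mul]

/-- Abstract construction of the rank-two free module isomorphism. -/
noncomputable def freeRankTwo {N : Type*} [AddCommGroup N] [Module A N]
    (L : Submodule A N) (T : N →ₗ[A] N) (x y : N) (μ ν : N →ₗ[A] A)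
    (hx : x ∈ L) (hy : y ∈ L)
    (hμx : μ x = 1) (hμy : μ y = 0) (hνx : ν x = 0) (hνy : ν y = 1)
    (hkey : ∀ z ∈ L, T z = μ z • x + ν z • y) :
    (Submodule.map T L) ≃ₗ[A] (Fin 2 → A) := by
  set S := Submodule.map T L with hS
  have hxS : x ∈ S := ⟨x, hx, by rw [hkey x hx, hμx, hνx]; simp⟩
  have hyS : y ∈ S := ⟨y, hy, by rw [hkey y hy, hμy, hνy]; simp⟩
  set g : (Fin 2 → A) →ₗ[A] N :=
    (LinearMap.proj 0).smulRight x + (LinearMap.proj 1).smulRight y with hg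
  have hgapp : ∀ c : Fin 2 → A, g c = c 0 • x + c 1 • y := fun c => rfl
  have hgS : ∀ c, g c ∈ S := fun c => by
    rw [hgapp]
    exact add_mem (S.smul_mem _ hxS) (S.smul_mem _ hyS)
  set r : N →ₗ[A] (Fin 2 → A) := LinearMap.pi ![μ, ν] with hr
  have hrapp : ∀ z : N, r z = ![μ z, ν z] := fun z => by
    funext i; fin_cases i <;> rfl
  refine LinearEquiv.ofLinear (r ∘ₗ S.subtype) (g.codRestrict S hgS) ?_ ?_
  · apply LinearMap.ext; intro c
    have e1 : μ (g c) = c 0 := by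
      rw [hgapp]; simp [map_add, map_smul, hμx, hμy, smul_eq_mul]
    have e2 : ν (g c) = c 1 := by
      rw [hgapp]; simp [map_add, map_smul, hνx, hνy, smul_eq_mul]
    show r (g c) = c
    rw [hrapp]
    funext i; fin_cases i
    · exact e1
    · exact e2
  · apply LinearMap.ext; rintro ⟨s, hs⟩
    apply Subtype.ext
    obtain ⟨z, hz, rfl⟩ := hs
    show g (r (T z)) = T z
    rw [hkey z hz]
    have h1 : μ (μ z • x + ν z • y) = μ z := by
      simp [map_add, map_smul, hμx, hμy, smul_eq_mul]
    have h2 : ν (μ z • x + ν z • y) = ν z := by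
      simp [map_add, map_smul, hνx, hνy, smul_eq_mul]
    rw [hgapp, hrapp]
    simp [h1, h2]

end MyLib
section Cr2
variable (A : Type*) [CommRing A]

def e1 : A × A := (1, 0)
def e2 : A × A := (0, 1)

@[simp] lemma prj1_apply (v : A × A) : prj1 A A A v = (v.1, 0) := rfl
@[simp] lemma prj2_apply (v : A × A) : prj2 A A A v = (0, v.2) := rfl

noncomputable def c12 : SymSq A (A × A) →ₗ[A] A :=
  sqLift (biProd (LinearMap.fst A A A) (LinearMap.snd A A A)
      + biProd (LinearMap.snd A A A) (LinearMap.fst A A A))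
    (fun a b => by simp; ring)

@[simp] lemma c12_mk (a b : A × A) :
    c12 A (Submodule.Quotient.mk (a ⊗ₜ[A] b)) = a.1 * b.2 + a.2 * b.1 := by
  simp [c12]

noncomputable def c22 : SymSq A (A × A) →ₗ[A] A :=
  sqLift (biProd (LinearMap.snd A A A) (LinearMap.snd A A A))
    (fun a b => by simp; ring)

@[simp] lemma c22_mk (a b : A × A) :
    c22 A (Submodule.Quotient.mk (a ⊗ₜ[A] b)) = a.2 * b.2 := by
  simp [c22]

noncomputable def ψ112 : SymCube A (A × A) →ₗ[A] A :=
  cubeLift (triProd (LinearMap.fst A A A) (LinearMap.fst A A A) (LinearMap.snd A A A)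
      + triProd (LinearMap.fst A A A) (LinearMap.snd A A A) (LinearMap.fst A A A)
      + triProd (LinearMap.snd A A A) (LinearMap.fst A A A) (LinearMap.fst A A A))
    (fun a b c => by simp; ring) (fun a b c => by simp; ring)

@[simp] lemma ψ112_mk (u a b : A × A) :
    ψ112 A (Submodule.Quotient.mk (u ⊗ₜ[A] (a ⊗ₜ[A] b)))
      = u.1 * (a.1 * b.2) + u.1 * (a.2 * b.1) + u.2 * (a.1 * b.1) := by
  simp [ψ112]

noncomputable def ψ122 : SymCube A (A × A) →ₗ[A] A :=
  cubeLift (triProd (LinearMap.fst A A A) (LinearMap.snd A A A) (LinearMap.snd A A A)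
      + triProd (LinearMap.snd A A A) (LinearMap.fst A A A) (LinearMap.snd A A A)
      + triProd (LinearMap.snd A A A) (LinearMap.snd A A A) (LinearMap.fst A A A))
    (fun a b c => by simp; ring) (fun a b c => by simp; ring)

@[simp] lemma ψ122_mk (u a b : A × A) :
    ψ122 A (Submodule.Quotient.mk (u ⊗ₜ[A] (a ⊗ₜ[A] b)))
      = u.1 * (a.2 * b.2) + u.2 * (a.1 * b.2) + u.2 * (a.2 * b.1) := by
  simp [ψ122]

noncomputable def μ2 : (A × A) ⊗[A] SymSq A (A × A) →ₗ[A] A :=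
  TensorProduct.lift ((LinearMap.fst A A A).smulRight (c12 A))

@[simp] lemma μ2_tmul (v : A × A) (s : SymSq A (A × A)) :
    μ2 A (v ⊗ₜ[A] s) = v.1 * c12 A s := by
  simp [μ2, smul_eq_mul]

noncomputable def μ3 : (A × A) ⊗[A] SymSq A (A × A) →ₗ[A] A :=
  TensorProduct.lift ((LinearMap.fst A A A).smulRight (c22 A))

@[simp] lemma μ3_tmul (v : A × A) (s : SymSq A (A × A)) :
    μ3 A (v ⊗ₜ[A] s) = v.1 * c22 A s := by
  simp [μ3, smul_eq_mul]

noncomputable def xx : (A × A) ⊗[A] SymSq A (A × A) :=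
  e1 A ⊗ₜ[A] Submodule.Quotient.mk (e1 A ⊗ₜ[A] e2 A)
    - e2 A ⊗ₜ[A] Submodule.Quotient.mk (e1 A ⊗ₜ[A] e1 A)

noncomputable def yy : (A × A) ⊗[A] SymSq A (A × A) :=
  e1 A ⊗ₜ[A] Submodule.Quotient.mk (e2 A ⊗ₜ[A] e2 A)
    - e2 A ⊗ₜ[A] Submodule.Quotient.mk (e1 A ⊗ₜ[A] e2 A)

lemma xx_mem : xx A ∈ SchurL31 A := by
  simp only [SchurL31, LinearMap.mem_ker, xx, map_sub, symMul_tmul]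
  rw [← Submodule.Quotient.mk_sub, Submodule.Quotient.mk_eq_zero, sq3]
  have h : e1 A ⊗ₜ[A] (e1 A ⊗ₜ[A] e2 A) - e2 A ⊗ₜ[A] (e1 A ⊗ₜ[A] e1 A)
      = (e1 A ⊗ₜ[A] (e1 A ⊗ₜ[A] e2 A) - e1 A ⊗ₜ[A] (e2 A ⊗ₜ[A] e1 A))
        + (e1 A ⊗ₜ[A] (e2 A ⊗ₜ[A] e1 A) - e2 A ⊗ₜ[A] (e1 A ⊗ₜ[A] e1 A)) := by abel
  rw [h]
  exact add_mem (Submodule.subset_span (Or.inr ⟨_, _, _, rfl⟩))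
    (Submodule.subset_span (Or.inl ⟨_, _, _, rfl⟩))

lemma yy_mem : yy A ∈ SchurL31 A := by
  simp only [SchurL31, LinearMap.mem_ker, yy, map_sub, symMul_tmul]
  rw [← Submodule.Quotient.mk_sub, Submodule.Quotient.mk_eq_zero, sq3]
  have h : e1 A ⊗ₜ[A] (e2 A ⊗ₜ[A] e2 A) - e2 A ⊗ₜ[A] (e1 A ⊗ₜ[A] e2 A)
      = (e1 A ⊗ₜ[A] (e2 A ⊗ₜ[A] e2 A) - e2 A ⊗ₜ[A] (e1 A ⊗ₜ[A] e2 A)) := rfl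
  exact Submodule.subset_span (Or.inl ⟨_, _, _, rfl⟩)

set_option maxHeartbeats 2000000 in
lemma key2 : (ambMap (prj1 A A A + prj2 A A A) - ambMap (prj1 A A A) - ambMap (prj2 A A A))
    = (μ2 A).smulRight (xx A) + (μ3 A).smulRight (yy A)
      + ((ψ112 A) ∘ₗ symMul A).smulRight
          (e2 A ⊗ₜ[A] Submodule.Quotient.mk (e1 A ⊗ₜ[A] e1 A))
      + ((ψ122 A) ∘ₗ symMul A).smulRight
          (e2 A ⊗ₜ[A] Submodule.Quotient.mk (e1 A ⊗ₜ[A] e2 A)) := by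
  apply TensorProduct.ext'
  intro v s
  obtain ⟨w, rfl⟩ := Submodule.Quotient.mk_surjective _ s
  induction w using TensorProduct.induction_on with
  | zero => simp
  | add w1 w2 ih1 ih2 =>
      rw [Submodule.Quotient.mk_add, tmul_add, map_add, map_add, ih1, ih2]
  | tmul a b =>
      obtain ⟨v1, v2⟩ := v; obtain ⟨a1, a2⟩ := a; obtain ⟨b1, b2⟩ := b
      rw [show ((v1, v2) : A × A) = v1 • e1 A + v2 • e2 A by simp [e1, e2, Prod.ext_iff],
          show ((a1, a2) : A × A) = a1 • e1 A + a2 • e2 A by simp [e1, e2, Prod.ext_iff],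
          show ((b1, b2) : A × A) = b1 • e1 A + b2 • e2 A by simp [e1, e2, Prod.ext_iff]]
      simp only [tmul_add, add_tmul, tmul_smul, ← smul_tmul', smul_tmul,
        Submodule.Quotient.mk_add, Submodule.Quotient.mk_smul,
        map_add, map_smul, LinearMap.add_apply, LinearMap.sub_apply,
        LinearMap.smulRight_apply, LinearMap.comp_apply,
        ambMap_tmul, symMul_tmul, prj1_apply, prj2_apply, Prod.mk_zero_zero, Prod.fst_zero, Prod.snd_zero,
        μ2_tmul, μ3_tmul, c12_mk, c22_mk, ψ112_mk, ψ122_mk,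
        zero_tmul, tmul_zero, smul_zero, Submodule.Quotient.mk_zero,
        e1, e2, xx, yy, mul_one, mul_zero, one_mul, zero_mul, add_zero, zero_add]
      rw [sqmk_comm ((0:A),(1:A)) ((1:A),(0:A))]
      module

end Cr2
section Cr2b
variable (A : Type*) [CommRing A]

lemma μ2_xx : μ2 A (xx A) = 1 := by simp [xx, e1, e2]
lemma μ2_yy : μ2 A (yy A) = 0 := by simp [yy, e1, e2]
lemma μ3_xx : μ3 A (xx A) = 0 := by simp [xx, e1, e2]
lemma μ3_yy : μ3 A (yy A) = 1 := by simp [yy, e1, e2]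

lemma hkey2 : ∀ z ∈ SchurL31 (R := A) (M := A × A),
    (ambMap (prj1 A A A + prj2 A A A) - ambMap (prj1 A A A) - ambMap (prj2 A A A)) z
      = μ2 A z • xx A + μ3 A z • yy A := by
  intro z hz
  have hz0 : symMul A z = 0 := hz
  have h := congrFun (congrArg DFunLike.coe (key2 A)) z
  simp only [LinearMap.add_apply, LinearMap.smulRight_apply, LinearMap.comp_apply, hz0,
    map_zero, zero_smul, add_zero] at h
  exact h

theorem cr2_free : Nonempty ((cr2SchurL31AA A) ≃ₗ[A] (Fin 2 → A)) :=
  ⟨freeRankTwo (SchurL31 (R := A) (M := A × A)) _ (xx A) (yy A) (μ2 A) (μ3 A)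
    (xx_mem A) (yy_mem A) (μ2_xx A) (μ2_yy A) (μ3_xx A) (μ3_yy A) (hkey2 A)⟩

end Cr2b
section Cr3
variable (A : Type*) [CommRing A]

def f1 : A × A × A := (1, 0, 0)
def f2 : A × A × A := (0, 1, 0)
def f3 : A × A × A := (0, 0, 1)

noncomputable def ρ1 : A × A × A →ₗ[A] A := LinearMap.fst A A (A × A)
noncomputable def ρ2 : A × A × A →ₗ[A] A :=
  (LinearMap.fst A A A) ∘ₗ (LinearMap.snd A A (A × A))
noncomputable def ρ3 : A × A × A →ₗ[A] A :=
  (LinearMap.snd A A A) ∘ₗ (LinearMap.snd A A (A × A))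

@[simp] lemma ρ1_apply (v : A × A × A) : ρ1 A v = v.1 := rfl
@[simp] lemma ρ2_apply (v : A × A × A) : ρ2 A v = v.2.1 := rfl
@[simp] lemma ρ3_apply (v : A × A × A) : ρ3 A v = v.2.2 := rfl

@[simp] lemma qrj1_apply (v : A × A × A) : qrj1 A A A A v = (v.1, 0, 0) := rfl
@[simp] lemma qrj2_apply (v : A × A × A) : qrj2 A A A A v = (0, v.2.1, 0) := rfl
@[simp] lemma qrj3_apply (v : A × A × A) : qrj3 A A A A v = (0, 0, v.2.2) := rfl

noncomputable def c23 : SymSq A (A × A × A) →ₗ[A] A :=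
  sqLift (biProd (ρ2 A) (ρ3 A) + biProd (ρ3 A) (ρ2 A)) (fun a b => by simp; ring)

@[simp] lemma c23_mk (a b : A × A × A) :
    c23 A (Submodule.Quotient.mk (a ⊗ₜ[A] b)) = a.2.1 * b.2.2 + a.2.2 * b.2.1 := by
  simp [c23]

noncomputable def c13 : SymSq A (A × A × A) →ₗ[A] A :=
  sqLift (biProd (ρ1 A) (ρ3 A) + biProd (ρ3 A) (ρ1 A)) (fun a b => by simp; ring)

@[simp] lemma c13_mk (a b : A × A × A) :
    c13 A (Submodule.Quotient.mk (a ⊗ₜ[A] b)) = a.1 * b.2.2 + a.2.2 * b.1 := by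
  simp [c13]

noncomputable def ψ123 : SymCube A (A × A × A) →ₗ[A] A :=
  cubeLift (triProd (ρ1 A) (ρ2 A) (ρ3 A) + triProd (ρ1 A) (ρ3 A) (ρ2 A)
      + triProd (ρ2 A) (ρ1 A) (ρ3 A) + triProd (ρ2 A) (ρ3 A) (ρ1 A)
      + triProd (ρ3 A) (ρ1 A) (ρ2 A) + triProd (ρ3 A) (ρ2 A) (ρ1 A))
    (fun a b c => by simp; ring) (fun a b c => by simp; ring)

@[simp] lemma ψ123_mk (u a b : A × A × A) :
    ψ123 A (Submodule.Quotient.mk (u ⊗ₜ[A] (a ⊗ₜ[A] b)))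
      = u.1 * (a.2.1 * b.2.2) + u.1 * (a.2.2 * b.2.1)
        + u.2.1 * (a.1 * b.2.2) + u.2.1 * (a.2.2 * b.1)
        + u.2.2 * (a.1 * b.2.1) + u.2.2 * (a.2.1 * b.1) := by
  simp [ψ123]

noncomputable def μa : (A × A × A) ⊗[A] SymSq A (A × A × A) →ₗ[A] A :=
  TensorProduct.lift ((ρ1 A).smulRight (c23 A))

@[simp] lemma μa_tmul (v : A × A × A) (s : SymSq A (A × A × A)) :
    μa A (v ⊗ₜ[A] s) = v.1 * c23 A s := by
  simp [μa, smul_eq_mul]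

noncomputable def μb : (A × A × A) ⊗[A] SymSq A (A × A × A) →ₗ[A] A :=
  TensorProduct.lift ((ρ2 A).smulRight (c13 A))

@[simp] lemma μb_tmul (v : A × A × A) (s : SymSq A (A × A × A)) :
    μb A (v ⊗ₜ[A] s) = v.2.1 * c13 A s := by
  simp [μb, smul_eq_mul]

noncomputable def x3 : (A × A × A) ⊗[A] SymSq A (A × A × A) :=
  f1 A ⊗ₜ[A] Submodule.Quotient.mk (f2 A ⊗ₜ[A] f3 A)
    - f3 A ⊗ₜ[A] Submodule.Quotient.mk (f1 A ⊗ₜ[A] f2 A)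

noncomputable def y3 : (A × A × A) ⊗[A] SymSq A (A × A × A) :=
  f2 A ⊗ₜ[A] Submodule.Quotient.mk (f1 A ⊗ₜ[A] f3 A)
    - f3 A ⊗ₜ[A] Submodule.Quotient.mk (f1 A ⊗ₜ[A] f2 A)

lemma x3_mem : x3 A ∈ SchurL31 (R := A) (M := A × A × A) := by
  simp only [SchurL31, LinearMap.mem_ker, x3, map_sub, symMul_tmul]
  rw [← Submodule.Quotient.mk_sub, Submodule.Quotient.mk_eq_zero, sq3]
  have h : f1 A ⊗ₜ[A] (f2 A ⊗ₜ[A] f3 A) - f3 A ⊗ₜ[A] (f1 A ⊗ₜ[A] f2 A)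
      = (f1 A ⊗ₜ[A] (f2 A ⊗ₜ[A] f3 A) - f1 A ⊗ₜ[A] (f3 A ⊗ₜ[A] f2 A))
        + (f1 A ⊗ₜ[A] (f3 A ⊗ₜ[A] f2 A) - f3 A ⊗ₜ[A] (f1 A ⊗ₜ[A] f2 A)) := by abel
  rw [h]
  exact add_mem (Submodule.subset_span (Or.inr ⟨_, _, _, rfl⟩))
    (Submodule.subset_span (Or.inl ⟨_, _, _, rfl⟩))

lemma y3_mem : y3 A ∈ SchurL31 (R := A) (M := A × A × A) := by
  simp only [SchurL31, LinearMap.mem_ker, y3, map_sub, symMul_tmul]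
  rw [← Submodule.Quotient.mk_sub, Submodule.Quotient.mk_eq_zero, sq3]
  have h : f2 A ⊗ₜ[A] (f1 A ⊗ₜ[A] f3 A) - f3 A ⊗ₜ[A] (f1 A ⊗ₜ[A] f2 A)
      = (f2 A ⊗ₜ[A] (f1 A ⊗ₜ[A] f3 A) - f1 A ⊗ₜ[A] (f2 A ⊗ₜ[A] f3 A))
        + (f1 A ⊗ₜ[A] (f2 A ⊗ₜ[A] f3 A) - f1 A ⊗ₜ[A] (f3 A ⊗ₜ[A] f2 A))
        + (f1 A ⊗ₜ[A] (f3 A ⊗ₜ[A] f2 A) - f3 A ⊗ₜ[A] (f1 A ⊗ₜ[A] f2 A)) := by abel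
  rw [h]
  exact add_mem (add_mem (Submodule.subset_span (Or.inl ⟨_, _, _, rfl⟩))
      (Submodule.subset_span (Or.inr ⟨_, _, _, rfl⟩)))
    (Submodule.subset_span (Or.inl ⟨_, _, _, rfl⟩))

set_option maxHeartbeats 4000000 in
lemma key3 : (ambMap (qrj1 A A A A + qrj2 A A A A + qrj3 A A A A)
      - ambMap (qrj1 A A A A + qrj2 A A A A)
      - ambMap (qrj1 A A A A + qrj3 A A A A)
      - ambMap (qrj2 A A A A + qrj3 A A A A)
      + ambMap (qrj1 A A A A) + ambMap (qrj2 A A A A) + ambMap (qrj3 A A A A))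
    = (μa A).smulRight (x3 A) + (μb A).smulRight (y3 A)
      + ((ψ123 A) ∘ₗ symMul A).smulRight
          (f3 A ⊗ₜ[A] Submodule.Quotient.mk (f1 A ⊗ₜ[A] f2 A)) := by
  apply TensorProduct.ext'
  intro v s
  obtain ⟨w, rfl⟩ := Submodule.Quotient.mk_surjective _ s
  induction w using TensorProduct.induction_on with
  | zero => simp
  | add w1 w2 ih1 ih2 =>
      rw [Submodule.Quotient.mk_add, tmul_add, map_add, map_add, ih1, ih2]
  | tmul a b =>
      obtain ⟨v1, v2, v3⟩ := v; obtain ⟨a1, a2, a3⟩ := a; obtain ⟨b1, b2, b3⟩ := b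
      rw [show ((v1, v2, v3) : A × A × A) = v1 • f1 A + v2 • f2 A + v3 • f3 A by
            simp [f1, f2, f3, Prod.ext_iff],
          show ((a1, a2, a3) : A × A × A) = a1 • f1 A + a2 • f2 A + a3 • f3 A by
            simp [f1, f2, f3, Prod.ext_iff],
          show ((b1, b2, b3) : A × A × A) = b1 • f1 A + b2 • f2 A + b3 • f3 A by
            simp [f1, f2, f3, Prod.ext_iff]]
      simp only [tmul_add, add_tmul, tmul_smul, ← smul_tmul', smul_tmul,
        Submodule.Quotient.mk_add, Submodule.Quotient.mk_smul,
        map_add, map_smul, LinearMap.add_apply, LinearMap.sub_apply,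
        LinearMap.smulRight_apply, LinearMap.comp_apply,
        ambMap_tmul, symMul_tmul, qrj1_apply, qrj2_apply, qrj3_apply,
        Prod.mk_add_mk, Prod.mk_zero_zero, Prod.fst_zero, Prod.snd_zero,
        μa_tmul, μb_tmul, c23_mk, c13_mk, ψ123_mk,
        zero_tmul, tmul_zero, smul_zero, Submodule.Quotient.mk_zero,
        f1, f2, f3, x3, y3, mul_one, mul_zero, one_mul, zero_mul, add_zero, zero_add]
      rw [sqmk_comm ((0:A),(1:A),(0:A)) ((1:A),(0:A×A)),
          sqmk_comm ((0:A),(0:A),(1:A)) ((1:A),(0:A×A)),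
          sqmk_comm ((0:A),(0:A),(1:A)) ((0:A),(1:A),(0:A))]
      module

lemma μa_x3 : μa A (x3 A) = 1 := by simp [x3, f1, f2, f3]
lemma μa_y3 : μa A (y3 A) = 0 := by simp [y3, f1, f2, f3]
lemma μb_x3 : μb A (x3 A) = 0 := by simp [x3, f1, f2, f3]
lemma μb_y3 : μb A (y3 A) = 1 := by simp [y3, f1, f2, f3]

lemma hkey3 : ∀ z ∈ SchurL31 (R := A) (M := A × A × A),
    (ambMap (qrj1 A A A A + qrj2 A A A A + qrj3 A A A A)
      - ambMap (qrj1 A A A A + qrj2 A A A A)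
      - ambMap (qrj1 A A A A + qrj3 A A A A)
      - ambMap (qrj2 A A A A + qrj3 A A A A)
      + ambMap (qrj1 A A A A) + ambMap (qrj2 A A A A) + ambMap (qrj3 A A A A)) z
      = μa A z • x3 A + μb A z • y3 A := by
  intro z hz
  have hz0 : symMul A z = 0 := hz
  have h := congrFun (congrArg DFunLike.coe (key3 A)) z
  simp only [LinearMap.add_apply, LinearMap.smulRight_apply, LinearMap.comp_apply, hz0,
    map_zero, zero_smul, add_zero] at h
  exact h

theorem cr3_free : Nonempty ((cr3SchurL31AAA A) ≃ₗ[A] (Fin 2 → A)) :=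
  ⟨freeRankTwo (SchurL31 (R := A) (M := A × A × A)) _ (x3 A) (y3 A) (μa A) (μb A)
    (x3_mem A) (y3_mem A) (μa_x3 A) (μa_y3 A) (μb_x3 A) (μb_y3 A) (hkey3 A)⟩

end Cr3
/-- over a commutative ring `A`, the modules `cr₂(L³₁)(A,A)` and
`cr₃(L³₁)(A,A,A)` are free of rank `2`. -/
theorem cr2_cr3_schurL31_free_rank_two (A : Type*) [CommRing A] :
    Nonempty ((cr2SchurL31AA A) ≃ₗ[A] (Fin 2 → A)) ∧
    Nonempty ((cr3SchurL31AAA A) ≃ₗ[A] (Fin 2 → A)) := by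
  exact ⟨cr2_free A, cr3_free A⟩
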